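/- arXiv:1806.09429 — 6 statements merged into one kernel-verified Lean document; each statement's English description precedes it below -/
import Mathlib

section
/- Let E be a real Hilbert space, f : E → ℝ differentiable, μ-strongly convex with μ > 0 and L-smooth (∇f is L-Lipschitz). Then for every γ > 0 and all x, y ∈ E: ‖(x − γ∇f(x)) − (y − γ∇f(y))‖² ≤ (1 − 2γμL/(μ+L))‖x − y‖² − γ(2/(μ+L) − γ)‖∇f(x) − ∇f(y)‖². -/
/-!
Strong convexity and `L`-smoothness sandwich `f y - f x - ⟪∇f x, y - x⟫` between
`μ / 2 * ‖y - x‖ ^ 2` and `L / 2 * ‖y - x‖ ^ 2`. Subtracting `μ / 2 * ‖·‖ ^ 2` reduces to a convex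
function with constant `L - μ`, for which comparing the two bounds along a gradient step gives
cocoercivity `‖∇g x - ∇g y‖ ^ 2 ≤ (L - μ) * ⟪∇g x - ∇g y, x - y⟫`. Translated back to `f` this reads
`μ * L * ‖x - y‖ ^ 2 + ‖∇f x - ∇f y‖ ^ 2 ≤ (μ + L) * ⟪∇f x - ∇f y, x - y⟫`, and expanding the square
of the difference of the two gradient steps gives the claim.
-/

open Set
open scoped RealInnerProductSpace

section NormedSpace

variable {E : Type*} [NormedAddCommGroup E] [NormedSpace ℝ E]

theorem ConvexOn.add_fderiv_le {g : E → ℝ} {g' : StrongDual ℝ E} {x : E}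
    (hg : ConvexOn ℝ univ g) (hx : HasFDerivAt g g' x) (y : E) :
    g x + g' (y - x) ≤ g y := by
  set ℓ : ℝ →ᵃ[ℝ] E := AffineMap.lineMap x y
  have hconv : ConvexOn ℝ univ (g ∘ ℓ) := by simpa using hg.comp_affineMap ℓ
  have hderiv : HasDerivAt (g ∘ ℓ) (g' (y - x)) 0 := by
    have hx' : HasFDerivAt g g' (ℓ 0) := by simpa [ℓ] using hx
    exact hx'.comp_hasDerivAt (0 : ℝ) AffineMap.hasDerivAt_lineMap
  have := hconv.le_slope_of_hasDerivAt (mem_univ 0) (mem_univ 1) one_pos hderiv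
  simp only [slope_def_field, Function.comp_apply, ℓ, AffineMap.lineMap_apply_one,
    AffineMap.lineMap_apply_zero, sub_zero, div_one] at this
  linarith

theorem image_le_add_fderiv_add_half_mul_sq {f : E → ℝ} {f' : E → StrongDual ℝ E} {L : ℝ}
    (hf : ∀ z, HasFDerivAt f (f' z) z) (hL : ∀ z w, ‖f' z - f' w‖ ≤ L * ‖z - w‖) (x y : E) :
    f y ≤ f x + f' x (y - x) + L / 2 * ‖y - x‖ ^ 2 := by
  set ℓ : ℝ →ᵃ[ℝ] E := AffineMap.lineMap x y
  set φ : ℝ → ℝ := fun t => f (ℓ t) - t * f' x (y - x) - L / 2 * t ^ 2 * ‖y - x‖ ^ 2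
  have hφ : ∀ t, HasDerivAt φ (f' (ℓ t) (y - x) - f' x (y - x) - L * t * ‖y - x‖ ^ 2) t := by
    intro t
    have hline : HasDerivAt (fun t => f (ℓ t)) (f' (ℓ t) (y - x)) t :=
      (hf (ℓ t)).comp_hasDerivAt t AffineMap.hasDerivAt_lineMap
    have hlin : HasDerivAt (fun t : ℝ => t * f' x (y - x)) (f' x (y - x)) t := by
      simpa using (hasDerivAt_id t).mul_const (f' x (y - x))
    have hquad : HasDerivAt (fun t : ℝ => L / 2 * t ^ 2 * ‖y - x‖ ^ 2) (L * t * ‖y - x‖ ^ 2) t := by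
      refine (((hasDerivAt_pow 2 t).const_mul (L / 2)).mul_const (‖y - x‖ ^ 2)).congr_deriv ?_
      push_cast
      ring
    exact (hline.sub hlin).sub hquad
  have hanti : AntitoneOn φ (Ici 0) := by
    refine antitoneOn_of_hasDerivWithinAt_nonpos (convex_Ici 0)
      (fun t _ => (hφ t).continuousAt.continuousWithinAt) (fun t _ => (hφ t).hasDerivWithinAt)
      fun t ht => ?_
    rw [interior_Ici] at ht
    have hdist : ‖ℓ t - x‖ = t * ‖y - x‖ := by
      rw [AffineMap.lineMap_apply_module', add_sub_cancel_right, norm_smul,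
        Real.norm_of_nonneg ht.le]
    have : f' (ℓ t) (y - x) - f' x (y - x) ≤ L * t * ‖y - x‖ ^ 2 :=
      calc f' (ℓ t) (y - x) - f' x (y - x) = (f' (ℓ t) - f' x) (y - x) := rfl
        _ ≤ ‖(f' (ℓ t) - f' x) (y - x)‖ := Real.le_norm_self _
        _ ≤ ‖f' (ℓ t) - f' x‖ * ‖y - x‖ := ContinuousLinearMap.le_opNorm _ _
        _ ≤ L * ‖ℓ t - x‖ * ‖y - x‖ := by gcongr; exact hL _ _
        _ = L * t * ‖y - x‖ ^ 2 := by rw [hdist]; ring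
    linarith
  have := hanti self_mem_Ici (mem_Ici.2 zero_le_one) zero_le_one
  simp only [φ, ℓ, AffineMap.lineMap_apply_one, AffineMap.lineMap_apply_zero, one_mul, one_pow,
    mul_one, zero_mul, sub_zero, zero_pow two_ne_zero, mul_zero] at this
  linarith

end NormedSpace

theorem le_mul_of_forall_two_mul_sub_mul_sq_mul_le {a c K : ℝ} (hK : 0 ≤ K)
    (h : ∀ t, (2 * t - K * t ^ 2) * a ≤ c) : a ≤ K * c := by
  rcases hK.eq_or_lt with rfl | hK
  · by_contra! ha
    rw [zero_mul] at ha
    have := h ((c + 1) / (2 * a))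
    simp only [zero_mul, sub_zero] at this
    field_simp [ha.ne'] at this
    linarith
  · have := h K⁻¹
    field_simp at this
    linarith

section InnerProductSpace

variable {E : Type*} [NormedAddCommGroup E] [InnerProductSpace ℝ E]

theorem norm_sq_eq_norm_sq_add_two_mul_inner_add_norm_sq (x y : E) :
    ‖y‖ ^ 2 = ‖x‖ ^ 2 + 2 * ⟪x, y - x⟫ + ‖y - x‖ ^ 2 := by
  simpa using norm_add_sq_real x (y - x)

theorem add_inner_add_half_mul_sq_le_of_convexOn_sub [CompleteSpace E] {f : E → ℝ} {f' x : E}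
    {μ : ℝ} (hconv : ConvexOn ℝ univ fun z => f z - μ / 2 * ‖z‖ ^ 2) (hx : HasGradientAt f f' x)
    (y : E) : f x + ⟪f', y - x⟫ + μ / 2 * ‖y - x‖ ^ 2 ≤ f y := by
  have := hconv.add_fderiv_le
    (hx.hasFDerivAt.sub ((hasStrictFDerivAt_norm_sq x).hasFDerivAt.const_mul (μ / 2))) y
  simp only [sub_apply, smul_apply, InnerProductSpace.toDual_apply_apply, innerSL_apply_apply,
    smul_eq_mul, nsmul_eq_mul, norm_sq_eq_norm_sq_add_two_mul_inner_add_norm_sq x y] at this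
  linarith

theorem le_add_inner_add_half_mul_sq_of_lipschitz [CompleteSpace E] {f : E → ℝ} {f' : E → E}
    {L : ℝ} (hf : ∀ z, HasGradientAt f (f' z) z) (hL : ∀ z w, ‖f' z - f' w‖ ≤ L * ‖z - w‖)
    (x y : E) : f y ≤ f x + ⟪f' x, y - x⟫ + L / 2 * ‖y - x‖ ^ 2 :=
  image_le_add_fderiv_add_half_mul_sq (fun z => (hf z).hasFDerivAt)
    (fun z w => by rw [← map_sub, LinearIsometryEquiv.norm_map]; exact hL z w) x y

section QuadraticBounds

variable {g : E → ℝ} {g' : E → E} {K : ℝ}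

/-- Both bounds are evaluated at `y - t • (g' y - g' x)`, a gradient step from `y` for the function
`g - ⟪g' x, ·⟫`, which is minimized at `x`. -/
theorem add_inner_add_mul_norm_sq_le (hlow : ∀ x y, g x + ⟪g' x, y - x⟫ ≤ g y)
    (hup : ∀ x y, g y ≤ g x + ⟪g' x, y - x⟫ + K / 2 * ‖y - x‖ ^ 2) (x y : E) (t : ℝ) :
    g x + ⟪g' x, y - x⟫ + (t - K / 2 * t ^ 2) * ‖g' y - g' x‖ ^ 2 ≤ g y := by
  set w := g' y - g' x
  have hstep := (hlow x (y - t • w)).trans (hup y (y - t • w))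
  have hw : ⟪g' y, w⟫ - ⟪g' x, w⟫ = ‖w‖ ^ 2 := by
    rw [← inner_sub_left, real_inner_self_eq_norm_sq]
  rw [show y - t • w - x = (y - x) - t • w by abel, show y - t • w - y = -(t • w) by abel,
    norm_neg, norm_smul, inner_sub_right, inner_neg_right, real_inner_smul_right,
    real_inner_smul_right, mul_pow, Real.norm_eq_abs, sq_abs] at hstep
  linear_combination hstep - t * hw

theorem norm_sub_sq_le_mul_inner_of_quadratic_bounds (hK : 0 ≤ K)
    (hlow : ∀ x y, g x + ⟪g' x, y - x⟫ ≤ g y)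
    (hup : ∀ x y, g y ≤ g x + ⟪g' x, y - x⟫ + K / 2 * ‖y - x‖ ^ 2) (x y : E) :
    ‖g' x - g' y‖ ^ 2 ≤ K * ⟪g' x - g' y, x - y⟫ := by
  refine le_mul_of_forall_two_mul_sub_mul_sq_mul_le hK fun t => ?_
  have hxy := add_inner_add_mul_norm_sq_le hlow hup x y t
  have hyx := add_inner_add_mul_norm_sq_le hlow hup y x t
  rw [norm_sub_rev] at hyx ⊢
  simp only [inner_sub_left, inner_sub_right] at hxy hyx ⊢
  linarith

end QuadraticBounds

theorem mul_mul_norm_sq_add_norm_sq_le_inner_of_quadratic_bounds {f : E → ℝ} {f' : E → E}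
    {μ L : ℝ} (hμL : μ ≤ L)
    (hlow : ∀ x y, f x + ⟪f' x, y - x⟫ + μ / 2 * ‖y - x‖ ^ 2 ≤ f y)
    (hup : ∀ x y, f y ≤ f x + ⟪f' x, y - x⟫ + L / 2 * ‖y - x‖ ^ 2) (x y : E) :
    μ * L * ‖x - y‖ ^ 2 + ‖f' x - f' y‖ ^ 2 ≤ (μ + L) * ⟪f' x - f' y, x - y⟫ := by
  have hcoco := norm_sub_sq_le_mul_inner_of_quadratic_bounds
    (g := fun z => f z - μ / 2 * ‖z‖ ^ 2) (g' := fun z => f' z - μ • z) (sub_nonneg.2 hμL)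
    (fun a b => ?_) (fun a b => ?_) x y
  · rw [show f' x - μ • x - (f' y - μ • y) = (f' x - f' y) - μ • (x - y) by module] at hcoco
    generalize x - y = D at hcoco ⊢
    generalize f' x - f' y = G at hcoco ⊢
    rw [norm_sub_sq_real, inner_sub_left, real_inner_smul_left, real_inner_smul_right,
      real_inner_self_eq_norm_sq, norm_smul, mul_pow, Real.norm_eq_abs, sq_abs] at hcoco
    linarith
  all_goals
    simp only [inner_sub_left, real_inner_smul_left,
      norm_sq_eq_norm_sq_add_two_mul_inner_add_norm_sq a b]
    linarith [hlow a b, hup a b]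

theorem norm_sub_smul_sq_le_of_inner_lower_bound {D G : E} {μ L γ : ℝ} (hpos : 0 < μ + L)
    (hγ : 0 ≤ γ) (h : μ * L * ‖D‖ ^ 2 + ‖G‖ ^ 2 ≤ (μ + L) * ⟪G, D⟫) :
    ‖D - γ • G‖ ^ 2 ≤
      (1 - 2 * γ * μ * L / (μ + L)) * ‖D‖ ^ 2 - γ * (2 / (μ + L) - γ) * ‖G‖ ^ 2 := by
  have hinner : (μ * L * ‖D‖ ^ 2 + ‖G‖ ^ 2) / (μ + L) ≤ ⟪G, D⟫ := by
    rwa [div_le_iff₀' hpos]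
  have hrhs : (1 - 2 * γ * μ * L / (μ + L)) * ‖D‖ ^ 2 - γ * (2 / (μ + L) - γ) * ‖G‖ ^ 2 =
      ‖D‖ ^ 2 - 2 * γ * ((μ * L * ‖D‖ ^ 2 + ‖G‖ ^ 2) / (μ + L)) + γ ^ 2 * ‖G‖ ^ 2 := by
    field_simp
    ring
  rw [hrhs, norm_sub_sq_real, norm_smul, real_inner_smul_right, mul_pow, Real.norm_eq_abs,
    sq_abs, real_inner_comm]
  nlinarith

end InnerProductSpace

/-- contraction/cocoercivity inequality for the gradient step of a
`μ`-strongly convex (`μ > 0`) and `L`-smooth differentiable function on a real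
Hilbert space. -/
theorem dave_rpg_strongly_convex_gradient_step_inequality
    {E : Type*} [NormedAddCommGroup E] [InnerProductSpace ℝ E] [CompleteSpace E]
    (f : E → ℝ) (f' : E → E) (μ L : ℝ) (hμ : 0 < μ)
    (hdiff : ∀ x, HasGradientAt f (f' x) x)
    (hsconv : ConvexOn ℝ Set.univ (fun x => f x - μ / 2 * ‖x‖ ^ 2))
    (hsmooth : ∀ x y, ‖f' x - f' y‖ ≤ L * ‖x - y‖)
    (γ : ℝ) (hγ : 0 < γ) (x y : E) :
    ‖x - γ • f' x - (y - γ • f' y)‖ ^ 2 ≤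
      (1 - 2 * γ * μ * L / (μ + L)) * ‖x - y‖ ^ 2
        - γ * (2 / (μ + L) - γ) * ‖f' x - f' y‖ ^ 2 := by
  rcases eq_or_ne x y with rfl | hxy
  · simp
  have hlow := fun a b => add_inner_add_half_mul_sq_le_of_convexOn_sub hsconv (hdiff a) b
  have hup := le_add_inner_add_half_mul_sq_of_lipschitz hdiff hsmooth
  have hμL : μ ≤ L := by
    have hdist : 0 < ‖y - x‖ ^ 2 := by
      have := sub_ne_zero.2 hxy.symm
      positivity
    nlinarith [hlow x y, hup x y]
  rw [show x - γ • f' x - (y - γ • f' y) = (x - y) - γ • (f' x - f' y) by module]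
  exact norm_sub_smul_sq_le_of_inner_lower_bound (by linarith) hγ.le
    (mul_mul_norm_sq_add_norm_sq_le_inner_of_quadratic_bounds hμL hlow hup x y)
end

section
/- Let E be a real Hilbert space, f : E → ℝ differentiable, μ-strongly convex with μ ≥ 0 and L-smooth. Then for every γ ∈ (0, 2/(μ+L)] and all x, y ∈ E: ‖(x − γ∇f(x)) − (y − γ∇f(y))‖ ≤ (1 − γμ)‖x − y‖. -/
/-!
Put `h = f - (μ/2)‖·‖²`, with gradient `h' = f' - μ • id`. Then `h` is convex, and the descent
lemma for `f` gives `h b ≤ h a + ⟪h' a, b - a⟫ + (L - μ)/2 ‖b - a‖²`. Testing both bounds at the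
point `q - t • (h' q - h' p)` yields an inequality that is quadratic in `t` and holds for every real
`t`; its discriminant gives the co-coercivity `‖h' x - h' y‖² ≤ (L - μ) ⟪h' x - h' y, x - y⟫`,
with no division by `L - μ`. Writing the difference of the two gradient steps as
`(1 - γμ)(x - y) - γ(h' x - h' y)` and expanding the square, the cross term absorbs the last term
precisely when `γ(μ + L) ≤ 2`.
-/

open InnerProductSpace Set

theorem le_add_deriv_add_half_of_deriv_le {φ φ' : ℝ → ℝ} {c : ℝ}
    (hφ : ∀ t, HasDerivAt φ (φ' t) t) (hφ' : ∀ t ∈ Ico (0 : ℝ) 1, φ' t ≤ φ' 0 + c * t) :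
    φ 1 ≤ φ 0 + φ' 0 + c / 2 := by
  have hB (t : ℝ) :
      HasDerivAt (fun s => φ 0 + (φ' 0 * s + c / 2 * s ^ 2)) (φ' 0 + c * t) t :=
    ((((hasDerivAt_id' t).const_mul (φ' 0)).add
      ((hasDerivAt_pow 2 t).const_mul (c / 2))).const_add (φ 0)).congr_deriv (by ring)
  have := image_le_of_deriv_right_le_deriv_boundary (a := 0) (b := 1)
    (fun t _ => (hφ t).continuousAt.continuousWithinAt)
    (fun t _ => (hφ t).hasDerivWithinAt) (by simp)
    (fun t _ => (hB t).continuousAt.continuousWithinAt)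
    (fun t _ => (hB t).hasDerivWithinAt) hφ' (right_mem_Icc.2 zero_le_one)
  simpa [add_assoc] using this

section Gradient

variable {E : Type*} [NormedAddCommGroup E] [InnerProductSpace ℝ E] [CompleteSpace E]
  {f : E → ℝ} {f' : E → E}

theorem HasGradientAt.hasDerivAt_comp_add_smul {g a v : E} {t : ℝ}
    (h : HasGradientAt f g (a + t • v)) :
    HasDerivAt (fun s : ℝ => f (a + s • v)) ⟪g, v⟫_ℝ t := by
  have hline : HasDerivAt (fun s : ℝ => a + s • v) v t := by
    simpa using ((hasDerivAt_id t).smul_const v).const_add a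
  simpa [toDual_apply_apply, Function.comp_def] using h.hasFDerivAt.comp_hasDerivAt t hline

theorem HasGradientAt.sub_half_mul_norm_sq {g z : E} (h : HasGradientAt f g z) (c : ℝ) :
    HasGradientAt (fun w => f w - c / 2 * ‖w‖ ^ 2) (g - c • z) z := by
  rw [hasGradientAt_iff_hasFDerivAt]
  refine (h.hasFDerivAt.sub (((hasFDerivAt_id z).norm_sq).const_mul (c / 2))).congr_fderiv ?_
  ext v
  simp [toDual_apply_apply]
  ring

theorem ConvexOn.add_inner_le_of_hasGradientAt {g a : E} (hf : ConvexOn ℝ univ f)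
    (hg : HasGradientAt f g a) (b : E) : f a + ⟪g, b - a⟫_ℝ ≤ f b := by
  have hline : ConvexOn ℝ univ (fun s : ℝ => f (a + s • (b - a))) := by
    simpa [Function.comp_def, AffineMap.lineMap_apply, add_comm] using
      hf.comp_affineMap (AffineMap.lineMap a b)
  have := hline.le_slope_of_hasDerivAt (mem_univ 0) (mem_univ 1) one_pos
    (HasGradientAt.hasDerivAt_comp_add_smul (by simpa using hg))
  simp only [slope_def_field, one_smul, add_sub_cancel, zero_smul, add_zero, sub_zero,
    div_one] at this
  linarith

theorem le_add_inner_add_half_mul_norm_sq_of_lipschitz {L : ℝ}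
    (hf : ∀ z, HasGradientAt f (f' z) z) (hL : ∀ x y, ‖f' x - f' y‖ ≤ L * ‖x - y‖)
    (a b : E) : f b ≤ f a + ⟪f' a, b - a⟫_ℝ + L / 2 * ‖b - a‖ ^ 2 := by
  set v := b - a
  have key := le_add_deriv_add_half_of_deriv_le (φ := fun s : ℝ => f (a + s • v))
    (φ' := fun s => ⟪f' (a + s • v), v⟫_ℝ) (c := L * ‖v‖ ^ 2)
    (fun t => (hf _).hasDerivAt_comp_add_smul) fun t ht => by
      have hlip : ‖f' (a + t • v) - f' a‖ ≤ L * (t * ‖v‖) := by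
        simpa [norm_smul, abs_of_nonneg ht.1] using hL (a + t • v) a
      have := (real_inner_le_norm (f' (a + t • v) - f' a) v).trans
        (mul_le_mul_of_nonneg_right hlip (norm_nonneg v))
      simp only [zero_smul, add_zero, inner_sub_left] at this ⊢
      linarith
  simp only [zero_smul, add_zero, one_smul, v, add_sub_cancel] at key
  linarith

end Gradient

section Cocoercive

variable {E : Type*} [NormedAddCommGroup E] [InnerProductSpace ℝ E]

theorem sub_half_mul_norm_sq_le_add_inner_add {f : E → ℝ} {g a b : E} {L : ℝ} (μ : ℝ)
    (h : f b ≤ f a + ⟪g, b - a⟫_ℝ + L / 2 * ‖b - a‖ ^ 2) :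
    f b - μ / 2 * ‖b‖ ^ 2 ≤
      f a - μ / 2 * ‖a‖ ^ 2 + ⟪g - μ • a, b - a⟫_ℝ + (L - μ) / 2 * ‖b - a‖ ^ 2 := by
  have e1 : ⟪g - μ • a, b - a⟫_ℝ = ⟪g, b - a⟫_ℝ - μ * (⟪a, b⟫_ℝ - ‖a‖ ^ 2) := by
    simp only [inner_sub_left, inner_sub_right, real_inner_smul_left, real_inner_self_eq_norm_sq]
    ring
  have e2 : ‖b - a‖ ^ 2 = ‖b‖ ^ 2 - 2 * ⟪a, b⟫_ℝ + ‖a‖ ^ 2 := by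
    rw [norm_sub_sq_real, real_inner_comm]
  rw [e1]
  rw [e2] at h ⊢
  linarith

variable {h : E → ℝ} {h' : E → E} {K : ℝ}

theorem mul_two_sub_mul_mul_norm_sq_le_inner
    (hlow : ∀ a b, h a + ⟪h' a, b - a⟫_ℝ ≤ h b)
    (hup : ∀ a b, h b ≤ h a + ⟪h' a, b - a⟫_ℝ + K / 2 * ‖b - a‖ ^ 2) (a b : E) (t : ℝ) :
    t * (2 - K * t) * ‖h' a - h' b‖ ^ 2 ≤ ⟪h' a - h' b, a - b⟫_ℝ := by
  have one_sided (p q : E) :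
      h p + ⟪h' p, q - p⟫_ℝ + t * (1 - K * t / 2) * ‖h' q - h' p‖ ^ 2 ≤ h q := by
    set u := h' q - h' p
    have hp := hlow p (q - t • u)
    have hq := hup q (q - t • u)
    have hu : ⟪h' q, u⟫_ℝ - ⟪h' p, u⟫_ℝ = ‖u‖ ^ 2 := by
      rw [← inner_sub_left, real_inner_self_eq_norm_sq]
    rw [sub_right_comm, inner_sub_right, real_inner_smul_right] at hp
    rw [sub_sub_cancel_left, inner_neg_right, real_inner_smul_right, norm_neg, norm_smul,
      mul_pow, Real.norm_eq_abs, sq_abs] at hq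
    linear_combination hp + hq - t * hu
  have hab := one_sided a b
  have hba := one_sided b a
  rw [norm_sub_rev] at hab
  have e : ⟪h' a - h' b, a - b⟫_ℝ = -⟪h' a, b - a⟫_ℝ - ⟪h' b, a - b⟫_ℝ := by
    simp only [inner_sub_left, inner_sub_right]
    ring
  linear_combination hab + hba - e

theorem norm_sub_sq_le_mul_inner_of_quadratic_bounds_s1
    (hlow : ∀ a b, h a + ⟪h' a, b - a⟫_ℝ ≤ h b)
    (hup : ∀ a b, h b ≤ h a + ⟪h' a, b - a⟫_ℝ + K / 2 * ‖b - a‖ ^ 2) (a b : E) :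
    ‖h' a - h' b‖ ^ 2 ≤ K * ⟪h' a - h' b, a - b⟫_ℝ := by
  set u := h' a - h' b
  rcases eq_or_ne u 0 with hu | hu
  · simp [hu]
  have hdisc := discrim_le_zero (a := K * ‖u‖ ^ 2) (b := -2 * ‖u‖ ^ 2)
    (c := ⟪u, a - b⟫_ℝ) fun t => by
      linear_combination mul_two_sub_mul_mul_norm_sq_le_inner hlow hup a b t
  have hpos : 0 < ‖u‖ ^ 2 := by positivity
  rw [discrim] at hdisc
  nlinarith

theorem norm_smul_sub_smul_le {u d : E} {c γ : ℝ} (hud : 0 ≤ ⟪u, d⟫_ℝ)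
    (hcoco : ‖u‖ ^ 2 ≤ K * ⟪u, d⟫_ℝ) (hγ : 0 ≤ γ) (hc : 0 ≤ c) (hγK : γ * K ≤ 2 * c) :
    ‖c • d - γ • u‖ ≤ c * ‖d‖ := by
  have hsq : ‖c • d - γ • u‖ ^ 2 = c ^ 2 * ‖d‖ ^ 2 - 2 * c * γ * ⟪u, d⟫_ℝ + γ ^ 2 * ‖u‖ ^ 2 := by
    rw [norm_sub_sq_real, real_inner_smul_left, real_inner_smul_right, real_inner_comm,
      norm_smul, norm_smul, mul_pow, mul_pow, Real.norm_eq_abs, Real.norm_eq_abs, sq_abs, sq_abs]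
    ring
  refine (pow_le_pow_iff_left₀ (norm_nonneg _) (by positivity) two_ne_zero).1 ?_
  rw [hsq]
  nlinarith [mul_le_mul_of_nonneg_left hcoco (sq_nonneg γ),
    mul_le_mul_of_nonneg_right hγK (mul_nonneg hγ hud)]

end Cocoercive

theorem dave_rpg_gradient_step_contraction_general
    {E : Type*} [NormedAddCommGroup E] [InnerProductSpace ℝ E] [CompleteSpace E]
    (f : E → ℝ) (f' : E → E) (μ L : ℝ)
    (hdiff : ∀ x, HasGradientAt f (f' x) x)
    (hsconv : ConvexOn ℝ Set.univ (fun x => f x - μ / 2 * ‖x‖ ^ 2))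
    (hsmooth : ∀ x y, ‖f' x - f' y‖ ≤ L * ‖x - y‖)
    (γ : ℝ) (hγ0 : 0 < γ) (hγle : γ ≤ 2 / (μ + L)) (x y : E) :
    ‖x - γ • f' x - (y - γ • f' y)‖ ≤ (1 - γ * μ) * ‖x - y‖ := by
  rcases eq_or_ne x y with rfl | hxy
  · simp
  have hlow (a b : E) := hsconv.add_inner_le_of_hasGradientAt ((hdiff a).sub_half_mul_norm_sq μ) b
  have hup (a b : E) := sub_half_mul_norm_sq_le_add_inner_add μ
    (le_add_inner_add_half_mul_norm_sq_of_lipschitz hdiff hsmooth a b)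
  have hμL : μ ≤ L := by
    have hpos : 0 < ‖y - x‖ ^ 2 := pow_pos (norm_pos_iff.2 (sub_ne_zero.2 hxy.symm)) 2
    nlinarith [(hlow x y).trans (hup x y)]
  have hγ : γ * (μ + L) ≤ 2 := by
    have : 0 < μ + L := by
      by_contra! h
      linarith [div_nonpos_of_nonneg_of_nonpos zero_le_two h]
    rwa [← le_div_iff₀ this]
  have hstep : x - γ • f' x - (y - γ • f' y) =
      (1 - γ * μ) • (x - y) - γ • ((f' x - μ • x) - (f' y - μ • y)) := by
    module
  rw [hstep]
  exact norm_smul_sub_smul_le (by simpa using mul_two_sub_mul_mul_norm_sq_le_inner hlow hup x y 0)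
    (norm_sub_sq_le_mul_inner_of_quadratic_bounds_s1 hlow hup x y) hγ0.le
    (by nlinarith) (by nlinarith)

/-- the gradient step of a `μ`-strongly convex (`μ ≥ 0`) and `L`-smooth
function with stepsize `γ ∈ (0, 2/(μ+L)]` is a `(1 - γμ)`-contraction. -/
theorem dave_rpg_gradient_step_contraction
    {E : Type*} [NormedAddCommGroup E] [InnerProductSpace ℝ E] [CompleteSpace E]
    (f : E → ℝ) (f' : E → E) (μ L : ℝ) (hμ : 0 ≤ μ)
    (hdiff : ∀ x, HasGradientAt f (f' x) x)
    (hsconv : ConvexOn ℝ Set.univ (fun x => f x - μ / 2 * ‖x‖ ^ 2))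
    (hsmooth : ∀ x y, ‖f' x - f' y‖ ≤ L * ‖x - y‖)
    (γ : ℝ) (hγ0 : 0 < γ) (hγle : γ ≤ 2 / (μ + L)) (x y : E) :
    ‖x - γ • f' x - (y - γ • f' y)‖ ≤ (1 - γ * μ) * ‖x - y‖ :=
  dave_rpg_gradient_step_contraction_general f f' μ L hdiff hsconv hsmooth γ hγ0 hγle x y
end

section
/- Let E be a real Hilbert space, f_1,…,f_M : E → ℝ convex differentiable, and g : E → ℝ convex and lower semicontinuous. Let γ_1,…,γ_M > 0, π_i = (1/γ_i)/Σ_{j=1}^M (1/γ_j), and γ = M/Σ_{j=1}^M (1/γ_j). If x⋆ minimizes F = (1/M)Σ_{i=1}^M f_i + g over E, then, setting x̄⋆ = Σ_{i=1}^M π_i (x⋆ − γ_i ∇f_i(x⋆)), the point x⋆ is a minimizer of z ↦ g(z) + ‖z − x̄⋆‖²/(2γ); that is, x⋆ = prox_{γg}(x̄⋆). -/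
/-!
Restricting `F` to the segment from `x⋆` to `z` and bounding `g` there by its chord turns
minimality of `x⋆` into a one-variable Fermat condition, which gives the subgradient inequality
`g z ≥ g x⋆ - ⟪v, z - x⋆⟫` for `v = (1/M) Σ ∇fᵢ(x⋆)`. Since `πᵢ γᵢ = γ/M` and `Σ πᵢ = 1`, one has
`x⋆ - x̄⋆ = γ v`; expanding `‖z - x̄⋆‖² = ‖(z - x⋆) + γ v‖²` then compares the prox objective
at `z` and at `x⋆`.
-/

open Set RealInnerProductSpace

theorem IsMinOn.le_add_fderiv_sub_of_convexOn {E : Type*} [NormedAddCommGroup E]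
    [NormedSpace ℝ E] {h g : E → ℝ} {L : E →L[ℝ] ℝ} {x : E} (hh : HasFDerivAt h L x)
    (hg : ConvexOn ℝ univ g) (hmin : IsMinOn (h + g) univ x) (z : E) :
    g x ≤ g z + L (z - x) := by
  set ψ : ℝ → ℝ := fun t => h (x + t • (z - x)) + g x + t * (g z - g x)
  have hψ : HasDerivAt ψ (L (z - x) + (g z - g x)) 0 := by
    have hline : HasDerivAt (fun t : ℝ => x + t • (z - x)) (z - x) 0 := by
      simpa using ((hasDerivAt_id (0 : ℝ)).smul_const (z - x)).const_add x
    have := ((hh.comp_hasDerivAt_of_eq 0 hline (by simp)).add_const (g x)).fun_add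
      ((hasDerivAt_id (0 : ℝ)).mul_const (g z - g x))
    simpa using this
  have hψmin : IsMinOn ψ (Icc 0 1) 0 := by
    intro t ⟨ht0, ht1⟩
    have hconv : g (x + t • (z - x)) ≤ g x + t * (g z - g x) := by
      rw [show x + t • (z - x) = (1 - t) • x + t • z by module]
      have := hg.2 (mem_univ x) (mem_univ z) (sub_nonneg.2 ht1) ht0 (sub_add_cancel 1 t)
      simp only [smul_eq_mul] at this
      linarith
    have := hmin (mem_univ (x + t • (z - x)))
    simp only [ψ, mem_ofPred_eq, Pi.add_apply, zero_smul, add_zero, zero_mul] at this ⊢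
    linarith
  have := hψmin.localize.hasFDerivWithinAt_nonneg hψ.hasFDerivAt.hasFDerivWithinAt
    (y := 1) (mem_posTangentConeAt_of_segment_subset (by simp [segment_eq_Icc]))
  rw [ContinuousLinearMap.toSpanSingleton_apply, one_smul] at this
  linarith

theorem le_add_norm_sub_sq_div_of_sub_eq_smul {E : Type*} [NormedAddCommGroup E]
    [InnerProductSpace ℝ E] {g : E → ℝ} {x xbar v : E} {γ : ℝ} (hγ : 0 < γ)
    (hx : x - xbar = γ • v) (hsub : ∀ z, g x ≤ g z + ⟪v, z - x⟫) (z : E) :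
    g x + ‖x - xbar‖ ^ 2 / (2 * γ) ≤ g z + ‖z - xbar‖ ^ 2 / (2 * γ) := by
  have hz : z - xbar = (z - x) + γ • v := by rw [← hx]; abel
  have hexpand : ‖z - xbar‖ ^ 2 / (2 * γ) =
      ‖z - x‖ ^ 2 / (2 * γ) + ⟪v, z - x⟫ + ‖x - xbar‖ ^ 2 / (2 * γ) := by
    rw [hz, hx, norm_add_sq_real, inner_smul_right, real_inner_comm, norm_smul,
      Real.norm_of_nonneg hγ.le]
    field_simp
  have := hsub z
  rw [hexpand]
  linarith [div_nonneg (sq_nonneg ‖z - x‖) (by positivity : (0:ℝ) ≤ 2 * γ)]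

theorem sum_smul_sub_smul_eq_of_harmonic_weights {E ι : Type*} [AddCommGroup E] [Module ℝ E]
    [Fintype ι] {γi π : ι → ℝ} (hγi : ∀ i, γi i ≠ 0) (hS : ∑ j, 1 / γi j ≠ 0)
    (hπ : ∀ i, π i = (1 / γi i) / ∑ j, 1 / γi j) (x : E) (w : ι → E) :
    ∑ i, π i • (x - γi i • w i) = x - (∑ j, 1 / γi j)⁻¹ • ∑ i, w i := by
  have hπsum : ∑ i, π i = 1 := by
    simp only [hπ, ← Finset.sum_div, div_self hS]
  have hπγ : ∀ i, π i * γi i = (∑ j, 1 / γi j)⁻¹ := fun i => by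
    rw [hπ i]; field_simp [hγi i]
  simp only [smul_sub, smul_smul, hπγ, Finset.sum_sub_distrib, ← Finset.sum_smul, hπsum,
    one_smul, ← Finset.smul_sum]

theorem dave_rpg_fixed_point_is_prox_general
    {E : Type*} [NormedAddCommGroup E] [InnerProductSpace ℝ E] [CompleteSpace E]
    (M : ℕ) (hM : 1 ≤ M)
    (f : Fin M → E → ℝ) (f' : Fin M → E → E)
    (hdiff : ∀ i x, HasGradientAt (f i) (f' i x) x)
    (g : E → ℝ) (hgconv : ConvexOn ℝ Set.univ g)
    (γi : Fin M → ℝ) (hγi : ∀ i, 0 < γi i)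
    (π : Fin M → ℝ) (hπ : ∀ i, π i = (1 / γi i) / ∑ j, 1 / γi j)
    (γ : ℝ) (hγdef : γ = (M : ℝ) / ∑ j, 1 / γi j)
    (xstar : E)
    (hmin : ∀ y, (1 / (M : ℝ)) * ∑ i, f i xstar + g xstar ≤
      (1 / (M : ℝ)) * ∑ i, f i y + g y)
    (xbarstar : E) (hxbarstar : xbarstar = ∑ i, π i • (xstar - γi i • f' i xstar)) :
    ∀ z, g xstar + ‖xstar - xbarstar‖ ^ 2 / (2 * γ) ≤
      g z + ‖z - xbarstar‖ ^ 2 / (2 * γ) := by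
  have hMpos : (0 : ℝ) < M := by exact_mod_cast hM
  have hS : 0 < ∑ j, 1 / γi j :=
    Finset.sum_pos (fun j _ => one_div_pos.2 (hγi j)) (Finset.univ_nonempty_iff.2 ⟨⟨0, hM⟩⟩)
  set v : E := (1 / (M : ℝ)) • ∑ i, f' i xstar
  have hgrad : HasFDerivAt (fun y => (1 / (M : ℝ)) * ∑ i, f i y)
      ((1 / (M : ℝ)) • ∑ i, InnerProductSpace.toDual ℝ E (f' i xstar)) xstar :=
    (HasFDerivAt.fun_sum fun i _ => (hdiff i xstar).hasFDerivAt).const_mul (1 / (M : ℝ))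
  have hsub : ∀ z, g xstar ≤ g z + ⟪v, z - xstar⟫ := fun z => by
    simpa [v, inner_smul_left, sum_inner] using
      IsMinOn.le_add_fderiv_sub_of_convexOn hgrad hgconv (fun y _ => hmin y) z
  have hshift : xstar - xbarstar = γ • v := by
    rw [hxbarstar, sum_smul_sub_smul_eq_of_harmonic_weights (fun i => (hγi i).ne') hS.ne' hπ,
      sub_sub_cancel, smul_smul, hγdef]
    congr 1
    field_simp
  exact le_add_norm_sub_sq_div_of_sub_eq_smul (hγdef ▸ div_pos hMpos hS) hshift hsub

/-- fixed-point characterization of a minimizer of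
`F = (1/M) Σ fᵢ + g`: with `x̄⋆ = Σ πᵢ (x⋆ − γᵢ ∇fᵢ(x⋆))`, the minimizer `x⋆`
minimizes `z ↦ g(z) + ‖z − x̄⋆‖²/(2γ)`, i.e. `x⋆ = prox_{γg}(x̄⋆)`. -/
theorem dave_rpg_fixed_point_is_prox
    {E : Type*} [NormedAddCommGroup E] [InnerProductSpace ℝ E] [CompleteSpace E]
    (M : ℕ) (hM : 1 ≤ M)
    (f : Fin M → E → ℝ) (f' : Fin M → E → E)
    (hconv : ∀ i, ConvexOn ℝ Set.univ (f i))
    (hdiff : ∀ i x, HasGradientAt (f i) (f' i x) x)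
    (g : E → ℝ) (hgconv : ConvexOn ℝ Set.univ g) (hglsc : LowerSemicontinuous g)
    (γi : Fin M → ℝ) (hγi : ∀ i, 0 < γi i)
    (π : Fin M → ℝ) (hπ : ∀ i, π i = (1 / γi i) / ∑ j, 1 / γi j)
    (γ : ℝ) (hγdef : γ = (M : ℝ) / ∑ j, 1 / γi j)
    (xstar : E)
    (hmin : ∀ y, (1 / (M : ℝ)) * ∑ i, f i xstar + g xstar ≤
      (1 / (M : ℝ)) * ∑ i, f i y + g y)
    (xbarstar : E) (hxbarstar : xbarstar = ∑ i, π i • (xstar - γi i • f' i xstar)) :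
    ∀ z, g xstar + ‖xstar - xbarstar‖ ^ 2 / (2 * γ) ≤
      g z + ‖z - xbarstar‖ ^ 2 / (2 * γ) :=
  dave_rpg_fixed_point_is_prox_general M hM f f' hdiff g hgconv γi hγi π hπ γ hγdef xstar hmin
    xbarstar hxbarstar
end

section
/- Consider M ≥ 2 workers with an update schedule and the associated delays d_j^k and epoch sequence (k_m). If the delays are uniformly bounded, i.e. d_j^k ≤ d for all workers j and all times k ≥ 1, then every epoch has length k_{m+1} − k_m ≤ 2d + 1, and consequently k_m ≤ (2d + 1)·m for all m ≥ 0; in particular the epoch sequence grows at most linearly, k_m = O(mM) when d = M + τ with τ ≥ 0 fixed. -/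
/-- with delays uniformly bounded by `d`, every epoch has length at
most `2d + 1`, hence `k_m ≤ (2d + 1)·m` for all `m` (so `k_m = O(mM)` when
`d = M + τ`). -/
theorem epoch_scaling_uniformly_bounded_delays
    (M : ℕ) (hM : 2 ≤ M)
    (sched : ℕ → Fin M)
    (d : Fin M → ℕ → ℕ) (hd0 : ∀ j, d j 0 = 0)
    (hdup : ∀ k, 1 ≤ k → d (sched k) k = 0)
    (hdoth : ∀ k, 1 ≤ k → ∀ j, j ≠ sched k → d j k = d j (k - 1) + 1)
    (D : Fin M → ℕ → ℕ) (hD : ∀ j k, D j k = d j k + d j (k - d j k - 1) + 1)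
    (K : ℕ → ℕ) (hK0 : K 0 = 0)
    (hK : ∀ m, IsLeast {k | ∀ j, K m + D j k ≤ k} (K (m + 1)))
    (dd : ℕ) (hbound : ∀ j k, 1 ≤ k → d j k ≤ dd) :
    (∀ m, K (m + 1) - K m ≤ 2 * dd + 1) ∧ (∀ m, K m ≤ (2 * dd + 1) * m) := by
  have key : ∀ m, K (m + 1) ≤ K m + (2 * dd + 1) := by
    intro m
    have hmem : ∀ j, K m + D j (K m + (2 * dd + 1)) ≤ K m + (2 * dd + 1) := by
      intro j
      set k := K m + (2 * dd + 1) with hk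
      have hk1 : 1 ≤ k := by omega
      have h1 : d j k ≤ dd := hbound j k hk1
      have h2 : d j (k - d j k - 1) ≤ dd := by
        rcases Nat.eq_zero_or_pos (k - d j k - 1) with h | h
        · rw [h, hd0]; omega
        · exact hbound j _ h
      have := hD j k
      omega
    exact (hK m).2 hmem
  constructor
  · intro m; have := key m; omega
  · intro m
    induction m with
    | zero => simp [hK0]
    | succ n ih => have := key n; nlinarith
end

section
/- Consider M ≥ 2 workers with an update schedule and the associated delays d_j^k and epoch sequence (k_m). If the average delay is bounded, i.e. (1/M)Σ_{j=1}^M d_j^k ≤ d̄ for all times k ≥ 1, then every epoch has length k_{m+1} − k_m ≤ 2M(2d̄ − M + 3) − 3, and consequently, writing d̄ = (M−1)/2 + τ with τ ≥ 0, one has k_m ≤ 4M(τ + 1)·m for all m ≥ 0. -/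
section Aux

variable {M : ℕ} (sched : ℕ → Fin M) (d : Fin M → ℕ → ℕ)

lemma aux_d_le (hd0 : ∀ j, d j 0 = 0)
    (hdup : ∀ k, 1 ≤ k → d (sched k) k = 0)
    (hdoth : ∀ k, 1 ≤ k → ∀ j, j ≠ sched k → d j k = d j (k - 1) + 1) :
    ∀ t j, d j t ≤ t := by
  intro t
  induction t with
  | zero => intro j; simp [hd0]
  | succ n ih =>
    intro j
    by_cases h : j = sched (n + 1)
    · rw [h, hdup _ (by omega)]; omega
    · rw [hdoth (n + 1) (by omega) j h]
      simpa using ih j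

lemma aux_sched (hd0 : ∀ j, d j 0 = 0)
    (hdup : ∀ k, 1 ≤ k → d (sched k) k = 0)
    (hdoth : ∀ k, 1 ≤ k → ∀ j, j ≠ sched k → d j k = d j (k - 1) + 1) :
    ∀ t j, d j t < t → sched (t - d j t) = j := by
  intro t
  induction t with
  | zero => intro j h; omega
  | succ n ih =>
    intro j h
    by_cases hj : j = sched (n + 1)
    · rw [hj, hdup _ (by omega)]
      simp [hj]
    · have hrec := hdoth (n + 1) (by omega) j hj
      simp only [Nat.add_sub_cancel] at hrec
      have hlt : d j n < n := by omega
      have := ih j hlt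
      have harg : n + 1 - d j (n + 1) = n - d j n := by omega
      rw [harg]
      exact this

lemma aux_inj (hd0 : ∀ j, d j 0 = 0)
    (hdup : ∀ k, 1 ≤ k → d (sched k) k = 0)
    (hdoth : ∀ k, 1 ≤ k → ∀ j, j ≠ sched k → d j k = d j (k - 1) + 1) :
    ∀ t (j j' : Fin M), j ≠ j' → d j t < t → d j' t < t → d j t ≠ d j' t := by
  intro t j j' hne h1 h2 heq
  have e1 := aux_sched sched d hd0 hdup hdoth t j h1
  have e2 := aux_sched sched d hd0 hdup hdoth t j' h2
  rw [heq] at e1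
  exact hne (e1.symm.trans e2)

lemma aux_sum (hd0 : ∀ j, d j 0 = 0)
    (hdup : ∀ k, 1 ≤ k → d (sched k) k = 0)
    (hdoth : ∀ k, 1 ≤ k → ∀ j, j ≠ sched k → d j k = d j (k - 1) + 1) :
    ∀ t (s : Finset (Fin M)), s.card ≤ t + 1 →
      s.card * (s.card - 1) ≤ 2 * ∑ j ∈ s, d j t := by
  intro t s hcard
  have hdle := aux_d_le sched d hd0 hdup hdoth
  set n := s.card with hn
  -- double counting
  have key : ∑ j ∈ s, d j t = ∑ c ∈ Finset.range t, (s.filter (fun j => c < d j t)).card := by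
    have h1 : ∀ j ∈ s, d j t = ((Finset.range t).filter (fun c => c < d j t)).card := by
      intro j _
      have : (Finset.range t).filter (fun c => c < d j t) = Finset.range (d j t) := by
        ext c
        simp only [Finset.mem_filter, Finset.mem_range]
        have := hdle t j
        omega
      rw [this, Finset.card_range]
    rw [Finset.sum_congr rfl h1]
    simp only [Finset.card_filter]
    rw [Finset.sum_comm]
  rw [key]
  -- restrict to c < n - 1
  have hsub : Finset.range (n - 1) ⊆ Finset.range t := by
    apply Finset.range_subset_range.mpr; omega
  have hmono : ∑ c ∈ Finset.range (n - 1), (s.filter (fun j => c < d j t)).card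
      ≤ ∑ c ∈ Finset.range t, (s.filter (fun j => c < d j t)).card :=
    Finset.sum_le_sum_of_subset hsub
  -- pointwise lower bound
  have hpt : ∀ c ∈ Finset.range (n - 1), n - 1 - c ≤ (s.filter (fun j => c < d j t)).card := by
    intro c hc
    rw [Finset.mem_range] at hc
    have hsplit := Finset.card_filter_add_card_filter_not
      (s := s) (p := fun j => c < d j t)
    have hneg : (s.filter (fun j => ¬ c < d j t)).card ≤ c + 1 := by
      have hmaps : ∀ j ∈ s.filter (fun j => ¬ c < d j t), d j t ∈ Finset.range (c + 1) := by
        intro j hj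
        rw [Finset.mem_filter] at hj
        rw [Finset.mem_range]
        omega
      have hinj : Set.InjOn (fun j => d j t)
          (s.filter (fun j => ¬ c < d j t) : Finset (Fin M)) := by
        intro j hj j' hj' heq
        simp only [Finset.coe_filter, Set.mem_setOf_eq] at hj hj'
        by_contra hne
        exact aux_inj sched d hd0 hdup hdoth t j j' hne
          (by omega) (by omega) heq
      calc (s.filter (fun j => ¬ c < d j t)).card
          ≤ (Finset.range (c + 1)).card :=
            Finset.card_le_card_of_injOn _ hmaps hinj
        _ = c + 1 := Finset.card_range _
    omega
  have hlow : ∑ c ∈ Finset.range (n - 1), (n - 1 - c)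
      ≤ ∑ c ∈ Finset.range (n - 1), (s.filter (fun j => c < d j t)).card :=
    Finset.sum_le_sum hpt
  -- Gauss
  have hgauss : ∀ m : ℕ, 2 * ∑ c ∈ Finset.range m, (m - c) = m * (m + 1) := by
    intro m
    induction m with
    | zero => simp
    | succ p ih =>
      rw [Finset.sum_range_succ]
      have h1 : ∀ c ∈ Finset.range p, p + 1 - c = (p - c) + 1 := by
        intro c hc
        rw [Finset.mem_range] at hc
        omega
      rw [Finset.sum_congr rfl h1, Finset.sum_add_distrib, Finset.sum_const,
        Finset.card_range, smul_eq_mul, mul_one]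
      have h2 : p + 1 - p = 1 := by omega
      rw [h2]
      zify at ih ⊢
      linear_combination ih
  rcases Nat.eq_zero_or_pos n with hn0 | hn1
  · rw [hn0]; simp
  · have hg := hgauss (n - 1)
    have hrw : (n - 1) * (n - 1 + 1) = n * (n - 1) := by
      have : n - 1 + 1 = n := by omega
      rw [this, Nat.mul_comm]
    rw [hrw] at hg
    calc n * (n - 1) = 2 * ∑ c ∈ Finset.range (n - 1), (n - 1 - c) := hg.symm
      _ ≤ 2 * ∑ c ∈ Finset.range (n - 1), (s.filter (fun j => c < d j t)).card :=
          Nat.mul_le_mul_left 2 hlow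
      _ ≤ 2 * ∑ c ∈ Finset.range t, (s.filter (fun j => c < d j t)).card :=
          Nat.mul_le_mul_left 2 hmono

end Aux

/-- with the average delay bounded by `d̄`, every epoch has length at
most `2M(2d̄ − M + 3) − 3`; writing `d̄ = (M−1)/2 + τ` with `τ ≥ 0`, this gives
`k_m ≤ 4M(τ+1)·m`. -/
theorem epoch_scaling_average_bounded_delays
    (M : ℕ) (hM : 2 ≤ M)
    (sched : ℕ → Fin M)
    (d : Fin M → ℕ → ℕ) (hd0 : ∀ j, d j 0 = 0)
    (hdup : ∀ k, 1 ≤ k → d (sched k) k = 0)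
    (hdoth : ∀ k, 1 ≤ k → ∀ j, j ≠ sched k → d j k = d j (k - 1) + 1)
    (D : Fin M → ℕ → ℕ) (hD : ∀ j k, D j k = d j k + d j (k - d j k - 1) + 1)
    (K : ℕ → ℕ) (hK0 : K 0 = 0)
    (hK : ∀ m, IsLeast {k | ∀ j, K m + D j k ≤ k} (K (m + 1)))
    (dbar : ℝ) (hbound : ∀ k, 1 ≤ k → (∑ j, (d j k : ℝ)) ≤ M * dbar) :
    (∀ m, ((K (m + 1) : ℝ) - K m) ≤ 2 * M * (2 * dbar - M + 3) - 3) ∧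
    (∀ τ : ℝ, 0 ≤ τ → dbar = ((M : ℝ) - 1) / 2 + τ →
      ∀ m, (K m : ℝ) ≤ 4 * M * (τ + 1) * m) := by
  have hdle := aux_d_le sched d hd0 hdup hdoth
  have hM1 : (1 : ℕ) ≤ M := by omega
  have hMR : (2 : ℝ) ≤ (M : ℝ) := by exact_mod_cast hM
  -- total delay lower bound at time M gives 2 M dbar ≥ M (M-1)
  have hEnat : M * (M - 1) ≤ 2 * ∑ j : Fin M, d j M := by
    have := aux_sum sched d hd0 hdup hdoth M Finset.univ
      (by simp only [Finset.card_univ, Fintype.card_fin]; omega)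
    simpa using this
  have hsumM : (∑ j : Fin M, (d j M : ℝ)) ≤ M * dbar := hbound M (by omega)
  have hE : (M : ℝ) * ((M : ℝ) - 1) ≤ 2 * ((M : ℝ) * dbar) := by
    have h1 : ((M * (M - 1) : ℕ) : ℝ) ≤ ((2 * ∑ j : Fin M, d j M : ℕ) : ℝ) := by
      exact_mod_cast hEnat
    push_cast [Nat.cast_sub hM1] at h1
    linarith
  -- the uniform delay bound:  d j t ≤ M dbar - (M-1)(M-2)/2
  set C : ℝ := (M : ℝ) * dbar - ((M : ℝ) - 1) * ((M : ℝ) - 2) / 2 with hCdef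
  have hF : ∀ t j, (d j t : ℝ) ≤ C := by
    intro t j
    rcases Nat.eq_zero_or_pos t with ht0 | ht1
    · subst ht0
      rw [hd0]
      simp only [Nat.cast_zero, hCdef]
      nlinarith
    · by_cases hbig : M ≤ t + 2
      · -- use the other workers' delays
        have hcard : (Finset.univ.erase j).card = M - 1 := by
          simp [Finset.card_erase_of_mem]
        have hs := aux_sum sched d hd0 hdup hdoth t (Finset.univ.erase j)
          (by rw [hcard]; omega)
        rw [hcard] at hs
        have hsplit : ∑ j' : Fin M, d j' t = d j t + ∑ j' ∈ Finset.univ.erase j, d j' t := by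
          rw [← Finset.add_sum_erase _ _ (Finset.mem_univ j)]
        have hboundt := hbound t ht1
        have hcast1 : (∑ j' : Fin M, (d j' t : ℝ)) = ((∑ j' : Fin M, d j' t : ℕ) : ℝ) := by
          push_cast; ring
        have hcast2 : (((M - 1) * (M - 1 - 1) : ℕ) : ℝ)
            ≤ ((2 * ∑ j' ∈ Finset.univ.erase j, d j' t : ℕ) : ℝ) := by exact_mod_cast hs
        push_cast [Nat.cast_sub hM1, Nat.cast_sub (by omega : 1 ≤ M - 1)] at hcast2
        have := hsplit
        have hlin : ((d j t : ℝ)) + (∑ j' ∈ Finset.univ.erase j, (d j' t : ℝ))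
            = ∑ j' : Fin M, (d j' t : ℝ) := by
          rw [← Finset.add_sum_erase _ _ (Finset.mem_univ j)]
        have hlin2 : (∑ j' ∈ Finset.univ.erase j, (d j' t : ℝ))
            = ((∑ j' ∈ Finset.univ.erase j, d j' t : ℕ) : ℝ) := by push_cast; ring
        rw [hlin2] at hlin
        rw [hCdef]
        nlinarith [hlin, hcast2, hboundt]
      · -- small t : d j t ≤ t ≤ M - 3
        have h1 : (d j t : ℝ) ≤ (t : ℝ) := by exact_mod_cast hdle t j
        have h2 : (t : ℝ) ≤ (M : ℝ) - 3 := by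
          have : t + 3 ≤ M := by omega
          have := (Nat.cast_le (α := ℝ)).mpr this
          push_cast at this
          linarith
        rw [hCdef]
        nlinarith
  have hC0 : 0 ≤ C := by
    have := hF 0 ⟨0, by omega⟩
    rw [hd0] at this
    exact_mod_cast this
  -- Part 1
  have part1 : ∀ m, ((K (m + 1) : ℝ) - K m) ≤ 2 * M * (2 * dbar - M + 3) - 3 := by
    intro m
    set T : ℕ := ⌈2 * C⌉₊ + 1 with hTdef
    have hTreal : (T : ℝ) ≤ 2 * C + 2 := by
      have := Nat.ceil_lt_add_one (by linarith : (0:ℝ) ≤ 2 * C)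
      push_cast [hTdef]
      linarith
    have hTge : 2 * C + 1 ≤ (T : ℝ) := by
      have := Nat.le_ceil (2 * C)
      push_cast [hTdef]
      linarith
    have hmem : (K m + T) ∈ {k | ∀ j, K m + D j k ≤ k} := by
      intro j
      have hDle : (D j (K m + T) : ℝ) ≤ 2 * C + 1 := by
        rw [hD]
        push_cast
        have h1 := hF (K m + T) j
        have h2 := hF (K m + T - d j (K m + T) - 1) j
        linarith
      have : (D j (K m + T) : ℝ) ≤ (T : ℝ) := by linarith
      have hDn : D j (K m + T) ≤ T := by exact_mod_cast this
      omega
    have hle : K (m + 1) ≤ K m + T := (hK m).2 hmem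
    have hleR : (K (m + 1) : ℝ) ≤ (K m : ℝ) + T := by exact_mod_cast hle
    have hfin : 2 * C + 2 ≤ 2 * M * (2 * dbar - M + 3) - 3 := by
      rw [hCdef]
      nlinarith
    linarith
  refine ⟨part1, ?_⟩
  intro τ hτ hdbar m
  induction m with
  | zero => simp [hK0]
  | succ n ih =>
    have h1 := part1 n
    rw [hdbar] at h1
    have hexp : 2 * (M:ℝ) * (2 * (((M : ℝ) - 1) / 2 + τ) - M + 3) - 3
        = 4 * M * (τ + 1) - 3 := by ring
    rw [hexp] at h1
    have hcast : ((n + 1 : ℕ) : ℝ) = (n : ℝ) + 1 := by push_cast; ring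
    rw [hcast]
    nlinarith
end

section
/- Consider M ≥ 2 workers with an update schedule, the associated delays d_j^k, and the epoch sequence (k_m). Fix m ≥ 1, let N = k_{m+1} − k_m, and let i = i(k_{m+1}) be the worker updating at time k_{m+1}. Then the sum of worker i's delays over the epoch satisfies Σ_{k = k_m}^{k_{m+1}−1} d_i^k ≥ N(N−1)/4. -/
set_option maxHeartbeats 1000000


/-- over one epoch `[k_m, k_{m+1})` with `N = k_{m+1} − k_m` and
`i = i(k_{m+1})` the worker updating at time `k_{m+1}`, the sum of worker `i`'s
delays over the epoch satisfies `Σ_{k=k_m}^{k_{m+1}−1} d_i^k ≥ N(N−1)/4`. -/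
theorem epoch_delay_sum_lower_bound
    (M : ℕ) (hM : 2 ≤ M)
    (sched : ℕ → Fin M)
    (d : Fin M → ℕ → ℕ) (hd0 : ∀ j, d j 0 = 0)
    (hdup : ∀ k, 1 ≤ k → d (sched k) k = 0)
    (hdoth : ∀ k, 1 ≤ k → ∀ j, j ≠ sched k → d j k = d j (k - 1) + 1)
    (D : Fin M → ℕ → ℕ) (hD : ∀ j k, D j k = d j k + d j (k - d j k - 1) + 1)
    (K : ℕ → ℕ) (hK0 : K 0 = 0)
    (hK : ∀ m, IsLeast {k | ∀ j, K m + D j k ≤ k} (K (m + 1)))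
    (m : ℕ) (hm : 1 ≤ m) :
    ((K (m + 1) : ℝ) - K m) * (((K (m + 1) : ℝ) - K m) - 1) / 4 ≤
      ∑ k ∈ Finset.Ico (K m) (K (m + 1)), (d (sched (K (m + 1))) k : ℝ) := by
  obtain ⟨hmem, hlb⟩ := hK m
  simp only [Set.mem_setOf_eq] at hmem
  set km := K m with hkmdef
  set k1 := K (m + 1) with hk1def
  set i := sched k1 with hidef
  have hDpos : ∀ j k, 1 ≤ D j k := fun j k => by rw [hD]; omega
  have hlt : km < k1 := by have h := hmem i; have := hDpos i k1; omega
  have h1 : 1 ≤ k1 := by omega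
  -- step lemma for D at k1
  have hstep : ∀ j, j ≠ sched k1 → D j k1 = D j (k1 - 1) + 1 := by
    intro j hj
    have hdr := hdoth k1 h1 j hj
    rw [hD j k1, hD j (k1 - 1), hdr]
    have he : k1 - (d j (k1 - 1) + 1) - 1 = k1 - 1 - d j (k1 - 1) - 1 := by omega
    rw [he]; ring
  -- failure at k1 - 1
  have hfail : ∃ j, k1 ≤ km + D j (k1 - 1) := by
    by_contra h
    push_neg at h
    have h2 : k1 ≤ k1 - 1 := hlb (fun j => by have := h j; omega)
    omega
  obtain ⟨j, hj⟩ := hfail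
  have hji : j = i := by
    by_contra hne
    have h2 := hstep j (by rwa [← hidef])
    have := hmem j
    omega
  rw [hji] at hj
  have hdk1 : d i k1 = 0 := hdup k1 h1
  have hDk1 : D i k1 = d i (k1 - 1) + 1 := by
    rw [hD, hdk1]; simp
  have hu1 : km + d i (k1 - 1) + 1 ≤ k1 := by have := hmem i; omega
  set u := d i (k1 - 1) with hudef
  set p := k1 - 1 - u with hpdef
  have hpk : km ≤ p := by omega
  -- backward lemma
  have hback : ∀ s k, s ≤ d i k → s ≤ k ∧ d i (k - s) = d i k - s := by
    intro s
    induction s with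
    | zero => intro k _; simp
    | succ n ih =>
      intro k hk
      have hdpos : 1 ≤ d i k := by omega
      have hk1' : 1 ≤ k := by
        by_contra hc
        have hk0 : k = 0 := by omega
        rw [hk0, hd0] at hdpos
        omega
      have hsne : i ≠ sched k := by
        intro hh
        have h0 := hdup k hk1'
        rw [← hh] at h0
        omega
      have hrec := hdoth k hk1' i hsne
      have h2 : n ≤ d i (k - 1) := by omega
      obtain ⟨h3, h4⟩ := ih (k - 1) h2
      refine ⟨by omega, ?_⟩
      have he : k - (n + 1) = k - 1 - n := by omega
      rw [he, h4]
      omega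
  have hval1 : ∀ k, p ≤ k → k < k1 → d i k = k - p := by
    intro k hka hkb
    have hs : k1 - 1 - k ≤ u := by omega
    obtain ⟨_, h4⟩ := hback (k1 - 1 - k) (k1 - 1) hs
    have he : k1 - 1 - (k1 - 1 - k) = k := by omega
    rw [he] at h4
    omega
  have key : (k1 - km) * ((k1 - km) - 1) ≤ 4 * ∑ k ∈ Finset.Ico km k1, d i k := by
    rcases eq_or_lt_of_le hpk with hcase | hcase
    · -- p = km : single ramp over whole epoch
      have hsum : ∑ k ∈ Finset.Ico km k1, d i k = ∑ j ∈ Finset.range (k1 - km), j := by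
        rw [Finset.sum_Ico_eq_sum_range]
        apply Finset.sum_congr rfl
        intro x hx
        rw [Finset.mem_range] at hx
        rw [hval1 (km + x) (by omega) (by omega)]
        omega
      rw [hsum]
      have hg := Finset.sum_range_id_mul_two (k1 - km)
      omega
    · -- km < p : two ramps
      set v := d i (p - 1) with hvdef
      have hDe : D i (k1 - 1) = u + v + 1 := by
        rw [hD i (k1 - 1), ← hudef]
      rw [hDe] at hj
      have hvw : p - km ≤ v := by omega
      have hval2 : ∀ k, km ≤ k → k < p → k - km + 1 ≤ d i k := by
        intro k hka hkb
        have hs : p - 1 - k ≤ v := by omega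
        obtain ⟨_, h4⟩ := hback (p - 1 - k) (p - 1) hs
        have he : p - 1 - (p - 1 - k) = k := by omega
        rw [he] at h4
        omega
      have hsplit : (∑ k ∈ Finset.Ico km p, d i k) + ∑ k ∈ Finset.Ico p k1, d i k
          = ∑ k ∈ Finset.Ico km k1, d i k :=
        Finset.sum_Ico_consecutive _ hpk (by omega)
      have hS2 : ∑ k ∈ Finset.Ico p k1, d i k = ∑ j ∈ Finset.range (k1 - p), j := by
        rw [Finset.sum_Ico_eq_sum_range]
        apply Finset.sum_congr rfl
        intro x hx
        rw [Finset.mem_range] at hx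
        rw [hval1 (p + x) (by omega) (by omega)]
        omega
      have hS1 : ∑ j ∈ Finset.range (p - km), (j + 1) ≤ ∑ k ∈ Finset.Ico km p, d i k := by
        rw [Finset.sum_Ico_eq_sum_range]
        apply Finset.sum_le_sum
        intro x hx
        rw [Finset.mem_range] at hx
        have := hval2 (km + x) (by omega) (by omega)
        omega
      have hsw : ∑ j ∈ Finset.range (p - km), (j + 1)
          = (∑ j ∈ Finset.range (p - km), j) + (p - km) := by
        rw [Finset.sum_add_distrib, Finset.sum_const, Finset.card_range, smul_eq_mul, mul_one]
      obtain ⟨w', hw'⟩ : ∃ w', p - km = w' + 1 := ⟨p - km - 1, by omega⟩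
      have hA : (∑ j ∈ Finset.range (k1 - p), j) * 2 = (u + 1) * u := by
        rw [Finset.sum_range_id_mul_two]
        have he : k1 - p = u + 1 := by omega
        rw [he, Nat.add_sub_cancel]
      have hB : (∑ j ∈ Finset.range (p - km), j) * 2 = (w' + 1) * w' := by
        rw [Finset.sum_range_id_mul_two, hw', Nat.add_sub_cancel]
      have hN : k1 - km = u + w' + 2 := by omega
      rw [hN]
      have hN1 : u + w' + 2 - 1 = u + w' + 1 := by omega
      rw [hN1]
      -- combine
      set A := ∑ j ∈ Finset.range (k1 - p), j with hAdef
      set B := ∑ j ∈ Finset.range (p - km), j with hBdef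
      set S1 := ∑ k ∈ Finset.Ico km p, d i k with hS1def
      set S2 := ∑ k ∈ Finset.Ico p k1, d i k with hS2def
      have h1' : B + (w' + 1) ≤ S1 := by rw [hsw, hw'] at hS1; exact hS1
      rw [← hsplit]
      have hq : ((u : ℤ) + w' + 2) * ((u : ℤ) + w' + 1)
          ≤ 2 * (((u : ℤ) + 1) * u) + 2 * (((w' : ℤ) + 1) * w') + 4 * ((w' : ℤ) + 1) := by
        nlinarith [sq_nonneg ((u : ℤ) - w'), sq_nonneg ((u : ℤ) - w' - 1)]
      have hA' : (A : ℤ) * 2 = ((u : ℤ) + 1) * u := by exact_mod_cast hA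
      have hB' : (B : ℤ) * 2 = ((w' : ℤ) + 1) * w' := by exact_mod_cast hB
      have h1'' : (B : ℤ) + ((w' : ℤ) + 1) ≤ (S1 : ℤ) := by exact_mod_cast h1'
      have hS2' : (S2 : ℤ) = (A : ℤ) := by exact_mod_cast hS2
      have hfin : ((u : ℤ) + w' + 2) * ((u : ℤ) + w' + 1) ≤ 4 * ((S1 : ℤ) + S2) := by
        linarith
      exact_mod_cast hfin
  -- cast to the real goal
  have key' : (((k1 - km) * ((k1 - km) - 1) : ℕ) : ℝ)
      ≤ ((4 * ∑ k ∈ Finset.Ico km k1, d i k : ℕ) : ℝ) := Nat.cast_le.mpr key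
  have e1 : ((k1 - km : ℕ) : ℝ) = (k1 : ℝ) - km := by
    push_cast [Nat.cast_sub hlt.le]; ring
  push_cast [Nat.cast_sub hlt.le, Nat.cast_sub (by omega : 1 ≤ k1 - km)] at key'
  linarith
end
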